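/- Let $p$ be a Markov transition kernel on $\mathcal{S}$, uniformly ergodic with constants $C > 0$, $\alpha \in (0,1)$ (so that the distribution from any initial state converges geometrically to the invariant distribution at rate $C\alpha^t$). Let $\mu^{(0)}_1, \mu^{(0)}_2$ be two initial distributions and let $\mu^{(i)}_1, \mu^{(i)}_2$ be the corresponding distributions at time $i$. Then $\sum_{i=0}^{\infty} \|\mu^{(i)}_1 - \mu^{(i)}_2\|_{TV} \leq \frac{m^\star}{1-\alpha}\,\|\mu^{(0)}_1 - \mu^{(0)}_2\|_{TV}$, where $m^\star = \lceil \log_{1/\alpha}(C) \rceil + 1$. -/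

import Mathlib

/-!
Write `d_i = sup_B (μ₁⁽ⁱ⁾(B) - μ₂⁽ⁱ⁾(B))`, half the total variation distance. A Markov kernel
whose rows `k(s, ·)`, `k(s', ·)` differ by at most `β` on every set contracts `d` by the factor `β`
(Dobrushin; integrate `s ↦ k(s, B)` against a Hahn decomposition of `μ - ν`). Any kernel has
`β ≤ 1`, so `d` is non-increasing. Uniform ergodicity makes the `m⋆`-step kernel have
`β ≤ C α ^ m⋆ ≤ α` by the triangle inequality through `μ⁽∞⁾`, so `d_i ≤ α ^ ⌊i / m⋆⌋ d_0`, and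
summing gives `m⋆ / (1 - α)` since each power of `α` appears `m⋆` times.
-/

open MeasureTheory

/-- Total variation norm of the difference of two measures. -/
noncomputable def tvDist {S : Type*} [MeasurableSpace S] (μ ν : Measure S) : ℝ :=
  sSup {x : ℝ | ∃ (n : ℕ) (B : Fin n → Set S), (∀ i, MeasurableSet (B i)) ∧
    (Pairwise fun i j => Disjoint (B i) (B j)) ∧ (⋃ i, B i) = Set.univ ∧
    x = ∑ i, |(μ (B i)).toReal - (ν (B i)).toReal|}

/-- The `m`-step transition law of the Markov chain with one-step kernel `p`, started at `s`. -/
noncomputable def stepDist {S : Type*} [MeasurableSpace S] (p : S → Measure S) :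
    ℕ → S → Measure S
  | 0, s => Measure.dirac s
  | n + 1, s => (stepDist p n s).bind p

lemma le_pow_div_mul_of_antitone {d : ℕ → ℝ} (hd : Antitone d) {m : ℕ} (hm : 0 < m) {β : ℝ}
    (hβ : 0 ≤ β) (hstep : ∀ i, d (i + m) ≤ β * d i) (i : ℕ) : d i ≤ β ^ (i / m) * d 0 := by
  induction i using Nat.strong_induction_on with
  | _ i ih =>
    rcases lt_or_ge i m with hi | hi
    · rw [Nat.div_eq_of_lt hi, pow_zero, one_mul]
      exact hd (Nat.zero_le i)
    · obtain ⟨j, rfl⟩ : ∃ j, i = j + m := ⟨i - m, by omega⟩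
      calc d (j + m) ≤ β * d j := hstep j
        _ ≤ β * (β ^ (j / m) * d 0) := mul_le_mul_of_nonneg_left (ih j (by omega)) hβ
        _ = β ^ ((j + m) / m) * d 0 := by rw [Nat.add_div_right j hm, pow_succ]; ring

lemma Finset.sum_range_mul_div {M : Type*} [AddCommMonoid M] (f : ℕ → M) (m n : ℕ) :
    ∑ i ∈ range (m * n), f (i / m) = m • ∑ q ∈ range n, f q := by
  induction n with
  | zero => simp
  | succ n ih =>
    have hblock : ∑ j ∈ range m, f ((m * n + j) / m) = m • f n := by
      rw [Finset.sum_congr rfl fun j hj => by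
        have hjm := Finset.mem_range.1 hj
        rw [Nat.mul_add_div (Nat.zero_lt_of_lt hjm), Nat.div_eq_of_lt hjm, add_zero]]
      simp
    rw [Nat.mul_succ, Finset.sum_range_add, ih, hblock, Finset.sum_range_succ, smul_add]

lemma tsum_le_of_le_pow_div_mul {a : ℕ → ℝ} (ha0 : ∀ i, 0 ≤ a i) {α T : ℝ} (hα0 : 0 ≤ α)
    (hα1 : α < 1) {m : ℕ} (hm : 0 < m) (ha : ∀ i, a i ≤ α ^ (i / m) * T) :
    ∑' i, a i ≤ m / (1 - α) * T := by
  have hT : 0 ≤ T := by simpa using (ha0 0).trans (ha 0)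
  refine Real.tsum_le_of_sum_range_le ha0 fun n => ?_
  calc ∑ i ∈ Finset.range n, a i
      ≤ ∑ i ∈ Finset.range (m * n), a i :=
        Finset.sum_le_sum_of_subset_of_nonneg (Finset.range_subset_range.2
          (Nat.le_mul_of_pos_left n hm)) fun i _ _ => ha0 i
    _ ≤ ∑ i ∈ Finset.range (m * n), α ^ (i / m) * T := Finset.sum_le_sum fun i _ => ha i
    _ = m * (∑ q ∈ Finset.range n, α ^ q) * T := by
        rw [← Finset.sum_mul, Finset.sum_range_mul_div (fun q => α ^ q), nsmul_eq_mul]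
    _ ≤ m * (1 / (1 - α)) * T := by
        gcongr
        simpa using geom_sum_Ico_le_of_lt_one (m := 0) (n := n) hα0 hα1
    _ = m / (1 - α) * T := by ring

lemma mul_pow_ceil_logb_le_one {C α : ℝ} (hC : 0 < C) (hα0 : 0 < α) (hα1 : α < 1) :
    C * α ^ ⌈Real.logb (1 / α) C⌉₊ ≤ 1 := by
  have hb : 1 < 1 / α := one_lt_one_div hα0 hα1
  have hle : C ≤ (1 / α) ^ (⌈Real.logb (1 / α) C⌉₊ : ℝ) :=
    (Real.logb_le_iff_le_rpow hb hC).1 (Nat.le_ceil _)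
  rw [Real.rpow_natCast, one_div_pow] at hle
  exact (le_div_iff₀ (by positivity)).1 hle

lemma Finset.sum_abs_eq_two_mul_sum_filter_nonneg {ι : Type*} [Fintype ι] (x : ι → ℝ)
    (hx : ∑ i, x i = 0) : ∑ i, |x i| = 2 * ∑ i with 0 ≤ x i, x i := by
  rw [← Finset.sum_filter_add_sum_filter_not _ (fun i => 0 ≤ x i)] at hx ⊢
  have hnonneg : ∑ i with 0 ≤ x i, |x i| = ∑ i with 0 ≤ x i, x i :=
    Finset.sum_congr rfl fun i hi => abs_of_nonneg (Finset.mem_filter.1 hi).2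
  have hneg : ∑ i with ¬0 ≤ x i, |x i| = -∑ i with ¬0 ≤ x i, x i := by
    rw [← Finset.sum_neg_distrib]
    exact Finset.sum_congr rfl fun i hi => abs_of_neg (not_le.1 (Finset.mem_filter.1 hi).2)
  linarith

section Measures

variable {S : Type*} [MeasurableSpace S]

noncomputable def supDiff (μ ν : Measure S) : ℝ :=
  sSup ((fun B => μ.real B - ν.real B) '' {B | MeasurableSet B})

section SupDiff

variable {μ ν : Measure S}

lemma measureReal_sub_le_supDiff [IsFiniteMeasure μ] {B : Set S} (hB : MeasurableSet B) :
    μ.real B - ν.real B ≤ supDiff μ ν := by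
  refine le_csSup ⟨μ.real Set.univ, ?_⟩ ⟨B, hB, rfl⟩
  rintro _ ⟨B', -, rfl⟩
  linarith [measureReal_mono (μ := μ) (Set.subset_univ B'), measureReal_nonneg (μ := ν) (s := B')]

lemma supDiff_nonneg [IsFiniteMeasure μ] : 0 ≤ supDiff μ ν := by
  simpa using measureReal_sub_le_supDiff (μ := μ) (ν := ν) .empty

lemma supDiff_le {c : ℝ} (hc : ∀ B, MeasurableSet B → μ.real B - ν.real B ≤ c) :
    supDiff μ ν ≤ c :=
  csSup_le ⟨_, ∅, MeasurableSet.empty, rfl⟩ (by rintro _ ⟨B, hB, rfl⟩; exact hc B hB)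

lemma measureReal_sub_measureReal_le_one (μ ν : Measure S) [IsProbabilityMeasure μ] (B : Set S) :
    μ.real B - ν.real B ≤ 1 := by
  linarith [measureReal_le_one (μ := μ) (s := B), measureReal_nonneg (μ := ν) (s := B)]

lemma Measurable.integrable_of_nonneg_of_le [IsFiniteMeasure μ] {g : S → ℝ} {β : ℝ}
    (hg : Measurable g) (hg0 : ∀ s, 0 ≤ g s) (hgβ : ∀ s, g s ≤ β) : Integrable g μ :=
  .of_bound hg.aestronglyMeasurable β
    (ae_of_all _ fun s => by rw [Real.norm_of_nonneg (hg0 s)]; exact hgβ s)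

lemma integral_sub_integral_le_of_le [IsFiniteMeasure μ] (hνμ : ν ≤ μ) {g : S → ℝ} {β : ℝ}
    (hg : Measurable g) (hg0 : ∀ s, 0 ≤ g s) (hgβ : ∀ s, g s ≤ β) :
    ∫ s, g s ∂μ - ∫ s, g s ∂ν ≤ β * (μ.real Set.univ - ν.real Set.univ) := by
  have : IsFiniteMeasure ν := isFiniteMeasure_of_le μ hνμ
  have hint (ρ : Measure S) [IsFiniteMeasure ρ] : Integrable g ρ :=
    hg.integrable_of_nonneg_of_le hg0 hgβ
  have hsplit : ∫ s, g s ∂μ = ∫ s, g s ∂(μ - ν) + ∫ s, g s ∂ν := by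
    rw [← integral_add_measure (hint _) (hint _), Measure.sub_add_cancel_of_le hνμ]
  have hdiff : (μ - ν).real Set.univ = μ.real Set.univ - ν.real Set.univ := by
    rw [measureReal_def, Measure.sub_apply .univ hνμ,
      ENNReal.toReal_sub_of_le (hνμ _) (measure_ne_top _ _)]
    rfl
  calc ∫ s, g s ∂μ - ∫ s, g s ∂ν = ∫ s, g s ∂(μ - ν) := by rw [hsplit]; ring
    _ ≤ ∫ _, β ∂(μ - ν) := integral_mono (hint _) (integrable_const β) hgβ
    _ = β * (μ.real Set.univ - ν.real Set.univ) := by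
        rw [integral_const, hdiff, smul_eq_mul, mul_comm]

lemma integral_sub_integral_le_mul_supDiff [IsFiniteMeasure μ] [IsFiniteMeasure ν] {g : S → ℝ}
    {β : ℝ} (hβ : 0 ≤ β) (hg : Measurable g) (hg0 : ∀ s, 0 ≤ g s) (hgβ : ∀ s, g s ≤ β) :
    ∫ s, g s ∂μ - ∫ s, g s ∂ν ≤ β * supDiff μ ν := by
  obtain ⟨E, hE, hνμ, hμν⟩ := hahn_decomposition μ ν
  have hint (ρ : Measure S) [IsFiniteMeasure ρ] : Integrable g ρ :=
    hg.integrable_of_nonneg_of_le hg0 hgβ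
  have hE_le : ν.restrict E ≤ μ.restrict E := Measure.le_iff.2 fun t ht => by
    simp only [Measure.restrict_apply ht]
    exact hνμ _ (ht.inter hE) Set.inter_subset_right
  have hEc_le : μ.restrict Eᶜ ≤ ν.restrict Eᶜ := Measure.le_iff.2 fun t ht => by
    simp only [Measure.restrict_apply ht]
    exact hμν _ (ht.inter hE.compl) Set.inter_subset_right
  have hon_E := integral_sub_integral_le_of_le hE_le hg hg0 hgβ
  have hon_Ec : ∫ s in Eᶜ, g s ∂μ ≤ ∫ s in Eᶜ, g s ∂ν :=
    integral_mono_measure hEc_le (ae_of_all _ hg0) (hint _)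
  rw [measureReal_restrict_apply_univ, measureReal_restrict_apply_univ] at hon_E
  rw [← integral_add_compl hE (hint μ), ← integral_add_compl hE (hint ν)]
  have hE_sup := mul_le_mul_of_nonneg_left (measureReal_sub_le_supDiff (μ := μ) (ν := ν) hE) hβ
  linarith

end SupDiff

lemma supDiff_bind_le_mul {T : Type*} [MeasurableSpace T] {k : S → Measure T}
    (hk : ∀ s, IsProbabilityMeasure (k s)) (hmk : Measurable k) {β : ℝ}
    (hosc : ∀ s s' B, MeasurableSet B → (k s).real B - (k s').real B ≤ β)
    (μ ν : Measure S) [IsProbabilityMeasure μ] [IsProbabilityMeasure ν] :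
    supDiff (μ.bind k) (ν.bind k) ≤ β * supDiff μ ν := by
  have : Nonempty S := nonempty_of_isProbabilityMeasure μ
  have hβ : 0 ≤ β := by simpa using hosc (Classical.arbitrary S) (Classical.arbitrary S) ∅ .empty
  refine supDiff_le fun B hB => ?_
  have hmeas : Measurable fun s => k s B := (Measure.measurable_coe hB).comp hmk
  set f : S → ℝ := fun s => (k s).real B
  have hbind : ∀ ρ : Measure S, (ρ.bind k).real B = ∫ s, f s ∂ρ := fun ρ => by
    rw [measureReal_def, Measure.bind_apply hB hmk.aemeasurable,
      ← integral_toReal hmeas.aemeasurable (ae_of_all _ fun s => measure_lt_top (k s) B)]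
    rfl
  have hfm : Measurable f := ENNReal.measurable_toReal.comp hmeas
  have hbdd : BddBelow (Set.range f) := ⟨0, by rintro _ ⟨s, rfl⟩; exact measureReal_nonneg⟩
  -- shifting `f` by its infimum brings its values into `[0, β]`
  set a := ⨅ s, f s
  have hg := integral_sub_integral_le_mul_supDiff (μ := μ) (ν := ν) (g := fun s => f s - a) hβ
    (hfm.sub_const a) (fun s => sub_nonneg.2 (ciInf_le hbdd s))
    (fun s => sub_le_comm.1 (le_ciInf fun s' => sub_le_comm.1 (hosc s s' B hB)))
  have hint (ρ : Measure S) [IsProbabilityMeasure ρ] : Integrable f ρ :=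
    hfm.integrable_of_nonneg_of_le (fun _ => measureReal_nonneg) fun _ => measureReal_le_one
  rw [integral_sub (hint μ) (integrable_const a), integral_sub (hint ν) (integrable_const a)] at hg
  simp only [integral_const, probReal_univ, one_smul] at hg
  rw [hbind, hbind]
  linarith

section TotalVariation

variable {μ ν : Measure S} [IsProbabilityMeasure μ] [IsProbabilityMeasure ν]

lemma sum_abs_measureReal_sub_le_two_mul_supDiff {ι : Type*} [Fintype ι] {B : ι → Set S}
    (hB : ∀ i, MeasurableSet (B i)) (hdisj : Pairwise fun i j => Disjoint (B i) (B j))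
    (hcover : ⋃ i, B i = Set.univ) :
    ∑ i, |μ.real (B i) - ν.real (B i)| ≤ 2 * supDiff μ ν := by
  classical
  have hunion (ρ : Measure S) [IsFiniteMeasure ρ] (s : Finset ι) :
      ρ.real (⋃ i ∈ s, B i) = ∑ i ∈ s, ρ.real (B i) :=
    measureReal_biUnion_finset (hdisj.set_pairwise _) fun i _ => hB i
  have hzero : ∑ i, (μ.real (B i) - ν.real (B i)) = 0 := by
    rw [Finset.sum_sub_distrib, ← hunion μ, ← hunion ν]
    simp [hcover]
  -- the sets on which `μ` dominates `ν` carry the whole positive part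
  rw [Finset.sum_abs_eq_two_mul_sum_filter_nonneg _ hzero, Finset.sum_sub_distrib,
    ← hunion μ, ← hunion ν]
  gcongr
  exact measureReal_sub_le_supDiff (Finset.measurableSet_biUnion _ fun i _ => hB i)

lemma tvDist_eq_two_mul_supDiff : tvDist μ ν = 2 * supDiff μ ν := by
  have hpair : ∀ B, MeasurableSet B →
      |μ.real B - ν.real B| + |μ.real Bᶜ - ν.real Bᶜ| ∈ {x : ℝ | ∃ (n : ℕ) (B : Fin n → Set S),
        (∀ i, MeasurableSet (B i)) ∧ (Pairwise fun i j => Disjoint (B i) (B j)) ∧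
        (⋃ i, B i) = Set.univ ∧ x = ∑ i, |(μ (B i)).toReal - (ν (B i)).toReal|} := by
    intro B hB
    refine ⟨2, ![B, Bᶜ], ?_, ?_, ?_, ?_⟩
    · intro i; fin_cases i <;> [exact hB; exact hB.compl]
    · intro i j hij
      fin_cases i <;> fin_cases j <;> simp_all [disjoint_compl_right, disjoint_compl_left]
    · ext y; simp [Fin.exists_fin_two, em]
    · rw [Fin.sum_univ_two]; rfl
  have hle : tvDist μ ν ≤ 2 * supDiff μ ν := by
    refine csSup_le ⟨_, hpair ∅ .empty⟩ ?_
    rintro _ ⟨n, B, hB, hdisj, hcover, rfl⟩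
    exact sum_abs_measureReal_sub_le_two_mul_supDiff hB hdisj hcover
  refine le_antisymm hle ?_
  have hhalf : supDiff μ ν ≤ tvDist μ ν / 2 := supDiff_le fun B hB => by
    have hmem : |μ.real B - ν.real B| + |μ.real Bᶜ - ν.real Bᶜ| ≤ tvDist μ ν := by
      refine le_csSup ⟨2 * supDiff μ ν, ?_⟩ (hpair B hB)
      rintro _ ⟨n, B, hB, hdisj, hcover, rfl⟩
      exact sum_abs_measureReal_sub_le_two_mul_supDiff hB hdisj hcover
    rw [probReal_compl_eq_one_sub hB, probReal_compl_eq_one_sub hB] at hmem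
    have := le_abs_self (μ.real B - ν.real B)
    have := neg_abs_le (1 - μ.real B - (1 - ν.real B))
    linarith
  linarith

lemma tvDist_nonneg : 0 ≤ tvDist μ ν := by
  rw [tvDist_eq_two_mul_supDiff]
  linarith [supDiff_nonneg (μ := μ) (ν := ν)]

end TotalVariation

lemma tvDist_comm (μ ν : Measure S) : tvDist μ ν = tvDist ν μ := by
  unfold tvDist
  simp only [abs_sub_comm (μ _).toReal]

lemma measureReal_sub_le_of_tvDist_le {μ ν ρ : Measure S} [IsProbabilityMeasure μ]
    [IsProbabilityMeasure ν] [IsProbabilityMeasure ρ] {c : ℝ} (hμ : tvDist μ ρ ≤ c)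
    (hν : tvDist ν ρ ≤ c) {B : Set S} (hB : MeasurableSet B) : μ.real B - ν.real B ≤ c := by
  rw [tvDist_eq_two_mul_supDiff] at hμ
  rw [tvDist_comm, tvDist_eq_two_mul_supDiff] at hν
  linarith [measureReal_sub_le_supDiff (μ := μ) (ν := ρ) hB,
    measureReal_sub_le_supDiff (μ := ρ) (ν := ν) hB]

section StepDist

variable {p : S → Measure S}

lemma measurable_stepDist (hmp : Measurable p) (n : ℕ) : Measurable (stepDist p n) := by
  induction n with
  | zero => exact Measure.measurable_dirac
  | succ n ih => exact (Measure.measurable_bind' hmp).comp ih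

lemma isProbabilityMeasure_stepDist (hp : ∀ s, IsProbabilityMeasure (p s)) (hmp : Measurable p)
    (n : ℕ) (s : S) : IsProbabilityMeasure (stepDist p n s) := by
  induction n with
  | zero => exact Measure.dirac.isProbabilityMeasure
  | succ n ih => exact isProbabilityMeasure_bind hmp.aemeasurable (ae_of_all _ hp)

lemma stepDist_add (hmp : Measurable p) (a b : ℕ) (s : S) :
    stepDist p (a + b) s = (stepDist p a s).bind (stepDist p b) := by
  induction b with
  | zero => exact Measure.bind_dirac.symm
  | succ b ih =>
    rw [← add_assoc, stepDist, ih,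
      Measure.bind_bind (measurable_stepDist hmp b).aemeasurable hmp.aemeasurable]
    rfl

lemma bind_stepDist_add (hmp : Measurable p) (μ : Measure S) (a b : ℕ) :
    μ.bind (stepDist p (a + b)) = (μ.bind (stepDist p a)).bind (stepDist p b) := by
  rw [funext (stepDist_add hmp a b), Measure.bind_bind (measurable_stepDist hmp a).aemeasurable
    (measurable_stepDist hmp b).aemeasurable]

lemma isProbabilityMeasure_bind_stepDist (hp : ∀ s, IsProbabilityMeasure (p s))
    (hmp : Measurable p) (μ : Measure S) [IsProbabilityMeasure μ] (n : ℕ) :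
    IsProbabilityMeasure (μ.bind (stepDist p n)) :=
  isProbabilityMeasure_bind (measurable_stepDist hmp n).aemeasurable
    (ae_of_all _ (isProbabilityMeasure_stepDist hp hmp n))

lemma supDiff_bind_stepDist_add_le (hp : ∀ s, IsProbabilityMeasure (p s)) (hmp : Measurable p)
    {b : ℕ} {β : ℝ}
    (hosc : ∀ s s' B, MeasurableSet B → (stepDist p b s).real B - (stepDist p b s').real B ≤ β)
    (μ ν : Measure S) [IsProbabilityMeasure μ] [IsProbabilityMeasure ν] (a : ℕ) :
    supDiff (μ.bind (stepDist p (a + b))) (ν.bind (stepDist p (a + b))) ≤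
      β * supDiff (μ.bind (stepDist p a)) (ν.bind (stepDist p a)) := by
  have := isProbabilityMeasure_bind_stepDist hp hmp μ a
  have := isProbabilityMeasure_bind_stepDist hp hmp ν a
  rw [bind_stepDist_add hmp, bind_stepDist_add hmp]
  exact supDiff_bind_le_mul (isProbabilityMeasure_stepDist hp hmp b) (measurable_stepDist hmp b)
    hosc _ _

lemma tvDist_bind_stepDist_le (hp : ∀ s, IsProbabilityMeasure (p s)) (hmp : Measurable p)
    {m : ℕ} (hm : 0 < m) {β : ℝ} (hβ : 0 ≤ β)
    (hosc : ∀ s s' B, MeasurableSet B → (stepDist p m s).real B - (stepDist p m s').real B ≤ β)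
    (μ ν : Measure S) [IsProbabilityMeasure μ] [IsProbabilityMeasure ν] (i : ℕ) :
    tvDist (μ.bind (stepDist p i)) (ν.bind (stepDist p i)) ≤ β ^ (i / m) * tvDist μ ν := by
  have := isProbabilityMeasure_bind_stepDist hp hmp μ i
  have := isProbabilityMeasure_bind_stepDist hp hmp ν i
  set d : ℕ → ℝ := fun i => supDiff (μ.bind (stepDist p i)) (ν.bind (stepDist p i))
  have hd_anti : Antitone d := antitone_nat_of_succ_le fun i => by
    simpa using supDiff_bind_stepDist_add_le hp hmp (b := 1)
      (fun s s' B _ => have := isProbabilityMeasure_stepDist hp hmp 1 s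
        measureReal_sub_measureReal_le_one _ _ B) μ ν i
  have hd0 : d 0 = supDiff μ ν := by
    simp only [d]
    rw [show stepDist p 0 = Measure.dirac from rfl, Measure.bind_dirac, Measure.bind_dirac]
  have hd := le_pow_div_mul_of_antitone hd_anti hm hβ
    (supDiff_bind_stepDist_add_le hp hmp hosc μ ν) i
  rw [tvDist_eq_two_mul_supDiff, tvDist_eq_two_mul_supDiff, ← hd0]
  linarith

end StepDist

end Measures

theorem stmt5_general {S : Type*} [MeasurableSpace S] (p : S → Measure S)
    (hp : ∀ s, IsProbabilityMeasure (p s)) (hmp : Measurable p)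
    (C α : ℝ) (hC : 0 < C) (hα : α ∈ Set.Ioo (0 : ℝ) 1)
    (μinf : Measure S) [IsProbabilityMeasure μinf]
    (herg : ∀ s t, tvDist (stepDist p t s) μinf ≤ C * α ^ t)
    (ν1 ν2 : Measure S) [IsProbabilityMeasure ν1] [IsProbabilityMeasure ν2] :
    ∑' i : ℕ, tvDist (ν1.bind (stepDist p i)) (ν2.bind (stepDist p i)) ≤
      ((⌈Real.logb (1 / α) C⌉₊ + 1 : ℕ) : ℝ) / (1 - α) * tvDist ν1 ν2 := by
  obtain ⟨hα0, hα1⟩ := hα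
  set m := ⌈Real.logb (1 / α) C⌉₊ + 1
  have hm : 0 < m := Nat.succ_pos _
  have hosc : ∀ s s' B, MeasurableSet B →
      (stepDist p m s).real B - (stepDist p m s').real B ≤ α := fun s s' B hB => by
    have := isProbabilityMeasure_stepDist hp hmp m s
    have := isProbabilityMeasure_stepDist hp hmp m s'
    refine (measureReal_sub_le_of_tvDist_le (herg s m) (herg s' m) hB).trans ?_
    rw [pow_succ, ← mul_assoc]
    exact mul_le_of_le_one_left hα0.le (mul_pow_ceil_logb_le_one hC hα0 hα1)
  refine tsum_le_of_le_pow_div_mul (fun i => ?_) hα0.le hα1 hm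
    (tvDist_bind_stepDist_le hp hmp hm hα0.le hosc ν1 ν2)
  have := isProbabilityMeasure_bind_stepDist hp hmp ν1 i
  have := isProbabilityMeasure_bind_stepDist hp hmp ν2 i
  exact tvDist_nonneg

theorem stmt5 {S : Type*} [MeasurableSpace S] (p : S → Measure S)
    (hp : ∀ s, IsProbabilityMeasure (p s)) (hmp : Measurable p)
    (C α : ℝ) (hC : 0 < C) (hα : α ∈ Set.Ioo (0 : ℝ) 1)
    (μinf : Measure S) [IsProbabilityMeasure μinf] (hinv : μinf.bind p = μinf)
    (herg : ∀ s t, tvDist (stepDist p t s) μinf ≤ C * α ^ t)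
    (ν1 ν2 : Measure S) [IsProbabilityMeasure ν1] [IsProbabilityMeasure ν2] :
    ∑' i : ℕ, tvDist (ν1.bind (stepDist p i)) (ν2.bind (stepDist p i)) ≤
      ((⌈Real.logb (1 / α) C⌉₊ + 1 : ℕ) : ℝ) / (1 - α) * tvDist ν1 ν2 :=
  stmt5_general p hp hmp C α hC hα μinf herg ν1 ν2
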